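/- arXiv:1910.08122 — 2 statements merged into one kernel-verified Lean document; each statement's English description precedes it below -/
import Mathlib

section
/- Let q be a prime and k ≤ n natural numbers. Let M : Fin k → (Fin n → ℤ) × (Fin n → ℤ) be in canonical form (the X-parts restricted to the first k coordinates form the k×k identity matrix) with every entry of M lying in {0, 1, …, q−1}, and suppose that for all i, j ∈ Fin k the symplectic product (M i) ⊙ (M j) is divisible by q. Then there exists M' : Fin k → (Fin n → ℤ) × (Fin n → ℤ) such that every entry of M' is congruent modulo q to the corresponding entry of M, (M' i) ⊙ (M' j) = 0 in ℤ for all i, j, and every entry of M' has absolute value at most (2 + (n − k)·(q − 1))·(q − 1). -/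
/-!
Canonical form makes the X-parts act as coordinate functionals on the first `k` columns, so
adding `U i j` to the Z-entry of row `i` in pivot column `j` changes `M i ⊙ M j` by
`U j i - U i j`. Taking for `U` the strictly upper triangular part of the Gram matrix
`S i j = M i ⊙ M j` (which is alternating) therefore makes all products vanish, and every
correction is a multiple of `q`. For `i < j` the corrected entry `Z i j + S i j` equals
`Z j i` plus the contributions of the `n - k` non-pivot columns, each at most `(q - 1)²`
in absolute value.
-/

/-- The symplectic product of two vectors `u v : (Fin n → R) × (Fin n → R)`,
where the first component is the X-part and the second the Z-part. -/
def symp {R : Type*} [CommRing R] {n : ℕ} (u v : (Fin n → R) × (Fin n → R)) : R :=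
  ∑ j, (v.2 j * u.1 j - v.1 j * u.2 j)

open Finset

section Symplectic

variable {R : Type*} [CommRing R] {n : ℕ}

theorem symp_swap (u v : (Fin n → R) × (Fin n → R)) : symp v u = -symp u v := by
  simp only [symp, ← sum_neg_distrib]
  exact sum_congr rfl fun _ _ => by ring

theorem symp_self (u : (Fin n → R) × (Fin n → R)) : symp u u = 0 := by
  simp [symp, mul_comm]

theorem symp_add_snd (u v : (Fin n → R) × (Fin n → R)) (a b : Fin n → R) :
    symp (u.1, u.2 + a) (v.1, v.2 + b) =
      symp u v + (∑ l, b l * u.1 l - ∑ l, a l * v.1 l) := by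
  simp only [symp, Pi.add_apply, ← sum_sub_distrib, ← sum_add_distrib]
  exact sum_congr rfl fun _ _ => by ring

end Symplectic

section CanonicalForm

variable {R : Type*} [CommRing R] {n k : ℕ} (hkn : k ≤ n)

def IsCanonical (M : Fin k → (Fin n → R) × (Fin n → R)) : Prop :=
  ∀ i i', (M i).1 (Fin.castLE hkn i') = if i = i' then 1 else 0

variable {hkn} {M : Fin k → (Fin n → R) × (Fin n → R)}

theorem IsCanonical.sum_extend_mul (hM : IsCanonical hkn M) (g : Fin k → R) (i : Fin k) :
    ∑ l, Function.extend (Fin.castLE hkn) g 0 l * (M i).1 l = g i := by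
  rw [sum_eq_single (Fin.castLE hkn i)]
  · simp [(Fin.castLE_injective hkn).extend_apply, hM i i]
  · intro l _ hl
    by_cases hpivot : ∃ a, Fin.castLE hkn a = l
    · obtain ⟨a, rfl⟩ := hpivot
      rw [hM i a, if_neg (by rintro rfl; exact hl rfl), mul_zero]
    · rw [Function.extend_apply' _ _ _ hpivot, Pi.zero_apply, zero_mul]
  · simp

theorem IsCanonical.symp_eq (hM : IsCanonical hkn M) (i j : Fin k) :
    symp (M i) (M j) = (M j).2 (Fin.castLE hkn i) - (M i).2 (Fin.castLE hkn j) +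
      ∑ l ∈ (univ.map (Fin.castLEEmb hkn))ᶜ, ((M j).2 l * (M i).1 l - (M j).1 l * (M i).2 l) := by
  rw [symp, ← sum_compl_add_sum (univ.map (Fin.castLEEmb hkn)), sum_map, add_comm]
  simp [hM i, hM j, sum_sub_distrib]

end CanonicalForm

section IsotropicLift

variable {R : Type*} [CommRing R] {n k : ℕ}

def sympUpper (M : Fin k → (Fin n → R) × (Fin n → R)) (i j : Fin k) : R :=
  if i < j then symp (M i) (M j) else 0

theorem sympUpper_sub_sympUpper (M : Fin k → (Fin n → R) × (Fin n → R)) (i j : Fin k) :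
    sympUpper M i j - sympUpper M j i = symp (M i) (M j) := by
  rcases lt_trichotomy i j with h | rfl | h
  · simp [sympUpper, h, h.not_gt]
  · simp [sympUpper, symp_self]
  · simp [sympUpper, h, h.not_gt, symp_swap (M j)]

variable (hkn : k ≤ n)

noncomputable def isotropicLift (M : Fin k → (Fin n → R) × (Fin n → R)) :
    Fin k → (Fin n → R) × (Fin n → R) :=
  fun i => ((M i).1, (M i).2 + Function.extend (Fin.castLE hkn) (sympUpper M i) 0)

variable {hkn} {M : Fin k → (Fin n → R) × (Fin n → R)}

theorem symp_isotropicLift (hM : IsCanonical hkn M) (i j : Fin k) :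
    symp (isotropicLift hkn M i) (isotropicLift hkn M j) = 0 := by
  rw [isotropicLift, isotropicLift, symp_add_snd, hM.sum_extend_mul, hM.sum_extend_mul,
    sympUpper_sub_sympUpper, symp_swap, neg_add_cancel]

theorem dvd_isotropicLift_snd_sub {c : R} (hc : ∀ i j, c ∣ symp (M i) (M j)) (i : Fin k)
    (l : Fin n) : c ∣ (isotropicLift hkn M i).2 l - (M i).2 l := by
  simp only [isotropicLift, Pi.add_apply, add_sub_cancel_left]
  by_cases hpivot : ∃ a, Fin.castLE hkn a = l
  · obtain ⟨a, rfl⟩ := hpivot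
    rw [(Fin.castLE_injective hkn).extend_apply, sympUpper]
    split_ifs
    exacts [hc i a, dvd_zero c]
  · rw [Function.extend_apply' _ _ _ hpivot]
    exact dvd_zero c

end IsotropicLift

section EntryBound

variable {R : Type*} [CommRing R] [LinearOrder R] [IsStrictOrderedRing R] {n k : ℕ}
  {hkn : k ≤ n} {M : Fin k → (Fin n → R) × (Fin n → R)} {Q : R}

theorem abs_sum_compl_castLE_le
    (hrange : ∀ i l, (0 ≤ (M i).1 l ∧ (M i).1 l ≤ Q) ∧ (0 ≤ (M i).2 l ∧ (M i).2 l ≤ Q))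
    (i j : Fin k) :
    |∑ l ∈ (univ.map (Fin.castLEEmb hkn))ᶜ, ((M j).2 l * (M i).1 l - (M j).1 l * (M i).2 l)| ≤
      (n - k : ℕ) * Q ^ 2 := by
  have hterm : ∀ l, |(M j).2 l * (M i).1 l - (M j).1 l * (M i).2 l| ≤ Q ^ 2 := fun l ↦ by
    obtain ⟨⟨hXi₀, hXi⟩, hZi₀, hZi⟩ := hrange i l
    obtain ⟨⟨hXj₀, hXj⟩, hZj₀, hZj⟩ := hrange j l
    rw [sq]
    exact abs_sub_le_of_nonneg_of_le
      (mul_nonneg hZj₀ hXi₀) (mul_le_mul hZj hXi hXi₀ (by linarith))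
      (mul_nonneg hXj₀ hZi₀) (mul_le_mul hXj hZi hZi₀ (by linarith))
  calc _ ≤ ∑ l ∈ (univ.map (Fin.castLEEmb hkn))ᶜ,
          |(M j).2 l * (M i).1 l - (M j).1 l * (M i).2 l| := abs_sum_le_sum_abs _ _
    _ ≤ (univ.map (Fin.castLEEmb hkn))ᶜ.card • Q ^ 2 :=
        sum_le_card_nsmul _ _ _ fun l _ ↦ hterm l
    _ = (n - k : ℕ) * Q ^ 2 := by simp [card_compl, nsmul_eq_mul]

theorem abs_isotropicLift_snd_le (hM : IsCanonical hkn M)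
    (hrange : ∀ i l, (0 ≤ (M i).1 l ∧ (M i).1 l ≤ Q) ∧ (0 ≤ (M i).2 l ∧ (M i).2 l ≤ Q))
    (i : Fin k) (l : Fin n) : |(isotropicLift hkn M i).2 l| ≤ Q + (n - k : ℕ) * Q ^ 2 := by
  have hZ : |(M i).2 l| ≤ Q + (n - k : ℕ) * Q ^ 2 := by
    obtain ⟨-, hZ₀, hZ⟩ := hrange i l
    rw [abs_of_nonneg hZ₀]
    exact le_add_of_le_of_nonneg hZ (by positivity)
  simp only [isotropicLift, Pi.add_apply]
  by_cases hpivot : ∃ a, Fin.castLE hkn a = l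
  · obtain ⟨a, rfl⟩ := hpivot
    rw [(Fin.castLE_injective hkn).extend_apply, sympUpper]
    split_ifs
    · have hZa := hrange a (Fin.castLE hkn i)
      rw [hM.symp_eq, ← add_assoc, add_sub_cancel]
      refine (abs_add_le _ _).trans (add_le_add ?_ (abs_sum_compl_castLE_le hrange i a))
      exact abs_le.2 ⟨by linarith [hZa.2.1], hZa.2.2⟩
    · rwa [add_zero]
  · rwa [Function.extend_apply' _ _ _ hpivot, Pi.zero_apply, add_zero]

end EntryBound

theorem embedding_entry_bound_general (q n k : ℕ) (hkn : k ≤ n)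
    (M : Fin k → (Fin n → ℤ) × (Fin n → ℤ))
    (hcanon : ∀ i i' : Fin k, (M i).1 (Fin.castLE hkn i') = if i = i' then 1 else 0)
    (hrange : ∀ i : Fin k, ∀ j : Fin n,
      (0 ≤ (M i).1 j ∧ (M i).1 j ≤ (q : ℤ) - 1) ∧
      (0 ≤ (M i).2 j ∧ (M i).2 j ≤ (q : ℤ) - 1))
    (hcomm : ∀ i j : Fin k, (q : ℤ) ∣ symp (M i) (M j)) :
    ∃ M' : Fin k → (Fin n → ℤ) × (Fin n → ℤ),
      (∀ i : Fin k, ∀ j : Fin n,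
        (M' i).1 j ≡ (M i).1 j [ZMOD q] ∧ (M' i).2 j ≡ (M i).2 j [ZMOD q]) ∧
      (∀ i j : Fin k, symp (M' i) (M' j) = 0) ∧
      (∀ i : Fin k, ∀ j : Fin n,
        |(M' i).1 j| ≤ ((2 + (n - k) * (q - 1)) * (q - 1) : ℕ) ∧
        |(M' i).2 j| ≤ ((2 + (n - k) * (q - 1)) * (q - 1) : ℕ)) := by
  refine ⟨isotropicLift hkn M,
    fun i l ↦ ⟨Int.ModEq.refl _,
      (Int.modEq_iff_dvd.2 (dvd_isotropicLift_snd_sub hcomm i l)).symm⟩,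
    symp_isotropicLift hcanon, fun i l ↦ ?_⟩
  obtain ⟨⟨hX₀, hX⟩, -⟩ := hrange i l
  have hq : 1 ≤ q := by omega
  have hbound : ((q : ℤ) - 1) + (n - k : ℕ) * ((q : ℤ) - 1) ^ 2 ≤
      (((2 + (n - k) * (q - 1)) * (q - 1) : ℕ) : ℤ) := by
    push_cast [Nat.cast_sub hq]
    nlinarith
  refine ⟨?_, (abs_isotropicLift_snd_le hcanon hrange i l).trans hbound⟩
  change |(M i).1 l| ≤ _
  rw [abs_of_nonneg hX₀]
  exact le_trans (le_add_of_le_of_nonneg hX (by positivity)) hbound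

/-- The invariant form produced from a canonical-form code with entries in
`{0, …, q-1}` has all entries bounded in absolute value by `(2+(n-k)(q-1))(q-1)`. -/
theorem embedding_entry_bound (q n k : ℕ) (hq : q.Prime) (hkn : k ≤ n)
    (M : Fin k → (Fin n → ℤ) × (Fin n → ℤ))
    (hcanon : ∀ i i' : Fin k, (M i).1 (Fin.castLE hkn i') = if i = i' then 1 else 0)
    (hrange : ∀ i : Fin k, ∀ j : Fin n,
      (0 ≤ (M i).1 j ∧ (M i).1 j ≤ (q : ℤ) - 1) ∧
      (0 ≤ (M i).2 j ∧ (M i).2 j ≤ (q : ℤ) - 1))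
    (hcomm : ∀ i j : Fin k, (q : ℤ) ∣ symp (M i) (M j)) :
    ∃ M' : Fin k → (Fin n → ℤ) × (Fin n → ℤ),
      (∀ i : Fin k, ∀ j : Fin n,
        (M' i).1 j ≡ (M i).1 j [ZMOD q] ∧ (M' i).2 j ≡ (M i).2 j [ZMOD q]) ∧
      (∀ i j : Fin k, symp (M' i) (M' j) = 0) ∧
      (∀ i : Fin k, ∀ j : Fin n,
        |(M' i).1 j| ≤ ((2 + (n - k) * (q - 1)) * (q - 1) : ℕ) ∧
        |(M' i).2 j| ≤ ((2 + (n - k) * (q - 1)) * (q - 1) : ℕ)) :=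
  embedding_entry_bound_general q n k hkn M hcanon hrange hcomm
end

section
/- Let p be a prime, n, k, d natural numbers with d ≥ 1, and set t = (d − 1) / 2 (natural-number floor division). Let M : Fin k → (Fin n → ZMod p) × (Fin n → ZMod p) and suppose every nonzero e : (Fin n → ZMod p) × (Fin n → ZMod p) that is undetectable for M has weight at least d. Then ∑_{j=0}^{t} (Nat.choose n j) · (p² − 1)^j ≤ p^k. (The qudit quantum Hamming bound for non-degenerate stabilizer codes.) -/
/-- The weight of a symplectic vector: the number of registers on which it is nonzero. -/
def wt {R : Type*} [Zero R] [DecidableEq R] {n : ℕ} (e : (Fin n → R) × (Fin n → R)) : ℕ :=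
  (Finset.univ.filter fun j : Fin n => (e.1 j, e.2 j) ≠ ((0 : R), (0 : R))).card

/-! An error `e`, viewed as a vector of pairs `Fin n → R × R`, has `wt e` equal to its Hamming
norm, and its syndrome `i ↦ symp (M i) e` is additive in `e`. If every nonzero error with zero
syndrome has weight greater than `2t`, two errors of weight at most `t` with the same syndrome
must coincide, so the syndrome is injective on the Hamming ball of radius `t`. That ball has
`∑_{j ≤ t} C(n, j) (|R|² - 1)^j` elements and there are only `|R|^k` syndromes. -/

open Finset

section HammingBall

variable {ι β : Type*} [Fintype ι] [DecidableEq ι] [Fintype β] [DecidableEq β] [Zero β]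

theorem filter_ne_zero_eq_iff_mem_piFinset (s : Finset ι) (f : ι → β) :
    ({i | f i ≠ 0} : Finset ι) = s ↔
      f ∈ Fintype.piFinset fun i => if i ∈ s then univ.erase 0 else {0} := by
  simp only [Fintype.mem_piFinset, Finset.ext_iff, mem_filter, mem_univ, true_and]
  refine forall_congr' fun i => ?_
  split_ifs with hi <;> simp [hi]

theorem card_filter_filter_ne_zero_eq (s : Finset ι) :
    #{f : ι → β | ({i | f i ≠ 0} : Finset ι) = s} = (Fintype.card β - 1) ^ #s := by
  simp_rw [filter_ne_zero_eq_iff_mem_piFinset, filter_mem_eq_inter, univ_inter,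
    Fintype.card_piFinset, apply_ite card, card_erase_of_mem (mem_univ _), card_singleton,
    prod_ite_mem, univ_inter, prod_const, card_univ]

theorem card_filter_hammingNorm_eq (j : ℕ) :
    #{f : ι → β | hammingNorm f = j} = (Fintype.card ι).choose j * (Fintype.card β - 1) ^ j := by
  rw [card_eq_sum_card_fiberwise (f := fun f : ι → β => ({i | f i ≠ 0} : Finset ι))
    (t := powersetCard j univ) (by intro f hf; simpa [mem_powersetCard, hammingNorm] using hf)]
  calc _ = ∑ _s ∈ powersetCard j (univ : Finset ι), (Fintype.card β - 1) ^ j :=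
        sum_congr rfl fun s hs => by
          rw [mem_powersetCard] at hs
          rw [← hs.2, ← card_filter_filter_ne_zero_eq, filter_filter]
          congr 1
          refine filter_congr fun f _ => ⟨And.right, fun h => ⟨?_, h⟩⟩
          rw [hammingNorm, h]
    _ = _ := by rw [sum_const, card_powersetCard, card_univ, smul_eq_mul]

theorem card_filter_hammingNorm_le (t : ℕ) :
    #{f : ι → β | hammingNorm f ≤ t} =
      ∑ j ∈ range (t + 1), (Fintype.card ι).choose j * (Fintype.card β - 1) ^ j := by
  rw [card_eq_sum_card_fiberwise (f := hammingNorm) (t := range (t + 1))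
    (by intro f hf; simpa [Nat.lt_succ_iff] using hf)]
  refine sum_congr rfl fun j hj => ?_
  rw [← card_filter_hammingNorm_eq, filter_filter]
  congr 1
  refine filter_congr fun f _ => ⟨And.right, fun h => ⟨?_, h⟩⟩
  rw [h]
  exact Nat.lt_succ_iff.mp (mem_range.mp hj)

end HammingBall

section HammingBound

variable {ι β H : Type*} [Fintype ι] [AddGroup β] [DecidableEq β] [AddGroup H]

theorem AddMonoidHom.injOn_setOf_hammingNorm_le (φ : (ι → β) →+ H) {t : ℕ}
    (hker : ∀ x, x ≠ 0 → φ x = 0 → 2 * t < hammingNorm x) :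
    Set.InjOn φ {x | hammingNorm x ≤ t} := by
  intro a ha b hb hab
  by_contra hne
  have hsub : hammingNorm (a - b) ≤ hammingNorm a + hammingNorm b := calc
    hammingNorm (a - b) = hammingDist a b := by
      simp only [hammingNorm, hammingDist, Pi.sub_apply, ne_eq, sub_eq_zero]
    _ ≤ hammingDist a 0 + hammingDist 0 b := hammingDist_triangle a 0 b
    _ = hammingNorm a + hammingNorm b := by rw [hammingDist_zero_right, hammingDist_zero_left]
  have := hker (a - b) (sub_ne_zero.mpr hne) (by rw [map_sub, hab, sub_self])
  have ha : hammingNorm a ≤ t := ha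
  have hb : hammingNorm b ≤ t := hb
  omega

theorem AddMonoidHom.hamming_bound [DecidableEq ι] [Fintype β] [Fintype H] (φ : (ι → β) →+ H)
    {t : ℕ} (hker : ∀ x, x ≠ 0 → φ x = 0 → 2 * t < hammingNorm x) :
    ∑ j ∈ Finset.range (t + 1), (Fintype.card ι).choose j * (Fintype.card β - 1) ^ j ≤
      Fintype.card H := by
  rw [← card_filter_hammingNorm_le, ← card_univ]
  exact card_le_card_of_injOn φ (fun _ _ => mem_univ _) fun a ha b hb =>
    φ.injOn_setOf_hammingNorm_le hker (by simpa using ha) (by simpa using hb)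

end HammingBound

section Symplectic

variable {R : Type*} [CommRing R] {n k : ℕ}

theorem symp_add (u a b : (Fin n → R) × (Fin n → R)) :
    symp u (a + b) = symp u a + symp u b := by
  simp only [symp, ← sum_add_distrib, Prod.fst_add, Prod.snd_add, Pi.add_apply]
  exact sum_congr rfl fun _ _ => by ring

def syndrome (M : Fin k → (Fin n → R) × (Fin n → R)) : (Fin n → R × R) →+ (Fin k → R) where
  toFun x i := symp (M i) (Equiv.arrowProdEquivProdArrow _ _ _ x)
  map_zero' := by ext; simp [symp]
  map_add' x y := funext fun i => symp_add (M i) (Equiv.arrowProdEquivProdArrow _ _ _ x)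
    (Equiv.arrowProdEquivProdArrow _ _ _ y)

theorem wt_arrowProdEquivProdArrow [DecidableEq R] (x : Fin n → R × R) :
    wt (Equiv.arrowProdEquivProdArrow (Fin n) (fun _ => R) (fun _ => R) x) = hammingNorm x :=
  rfl

end Symplectic

theorem quantum_hamming_bound_general (p n k d : ℕ) (hp : p.Prime)
    (M : Fin k → (Fin n → ZMod p) × (Fin n → ZMod p))
    (hdist : ∀ e : (Fin n → ZMod p) × (Fin n → ZMod p), e ≠ 0 →
      (∀ i : Fin k, symp (M i) e = 0) → d ≤ wt e) :
    ∑ j ∈ Finset.range ((d - 1) / 2 + 1), Nat.choose n j * (p ^ 2 - 1) ^ j ≤ p ^ k := by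
  have : NeZero p := ⟨hp.ne_zero⟩
  have hker : ∀ x, x ≠ 0 → syndrome M x = 0 → 2 * ((d - 1) / 2) < hammingNorm x := by
    intro x hx hsyn
    have hd := hdist _ ((Equiv.arrowProdEquivProdArrow _ _ _).injective.ne hx) (congrFun hsyn)
    rw [wt_arrowProdEquivProdArrow] at hd
    have := hammingNorm_pos_iff.mpr hx
    omega
  simpa [ZMod.card, sq] using (syndrome M).hamming_bound hker

/-- The qudit quantum Hamming bound for non-degenerate stabilizer codes. -/
theorem quantum_hamming_bound (p n k d : ℕ) (hp : p.Prime) (hd : 1 ≤ d)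
    (M : Fin k → (Fin n → ZMod p) × (Fin n → ZMod p))
    (hdist : ∀ e : (Fin n → ZMod p) × (Fin n → ZMod p), e ≠ 0 →
      (∀ i : Fin k, symp (M i) e = 0) → d ≤ wt e) :
    ∑ j ∈ Finset.range ((d - 1) / 2 + 1), Nat.choose n j * (p ^ 2 - 1) ^ j ≤ p ^ k :=
  quantum_hamming_bound_general p n k d hp M hdist
end
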